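/- Nishimori gauge identity for a two-bond correlation: for every pair of bonds b, b' ∈ B, [⟨S_b S_{b'}⟩] = [⟨S_b S_{b'}⟩²]. -/

import Mathlib

open MeasureTheory ProbabilityTheory Filter

noncomputable section

/-- The real value ±1 of a Boolean spin. -/
def spin (s : Bool) : ℝ := if s then 1 else -1

/-- The bond spin `S_b = S_n S_{n'}` for a bond `b` with endpoints `ep b = (n, n')`. -/
def bondSpin {V ι : Type*} (ep : ι → V × V) (S : V → Bool) (b : ι) : ℝ :=
  spin (S (ep b).1) * spin (S (ep b).2)

/-- The potential `U(j, S) = Σ_b x_b j_b S_b`. -/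
def potential {V ι : Type*} [Fintype ι] (ep : ι → V × V) (x j : ι → ℝ)
    (S : V → Bool) : ℝ :=
  ∑ b, x b * j b * bondSpin ep S b

/-- The partition function `Z(j) = Σ_S exp U(j,S)`. -/
def partitionFn {V ι : Type*} [Fintype V] [DecidableEq V] [Fintype ι]
    (ep : ι → V × V) (x j : ι → ℝ) : ℝ :=
  ∑ S : V → Bool, Real.exp (potential ep x j S)

/-- The Boltzmann–Gibbs expectation `⟨f⟩` at fixed disorder `j`. -/
def gibbs {V ι : Type*} [Fintype V] [DecidableEq V] [Fintype ι]
    (ep : ι → V × V) (x j : ι → ℝ) (f : (V → Bool) → ℝ) : ℝ :=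
  (∑ S : V → Bool, f S * Real.exp (potential ep x j S)) / partitionFn ep x j

/-- The law of the couplings: independent Gaussians, `j_b` of mean `x_b` and variance 1. -/
def couplings {ι : Type*} [Fintype ι] (x : ι → ℝ) : Measure (ι → ℝ) :=
  Measure.pi fun b => gaussianReal (x b) 1

/-- The quenched average `[F]`. -/
def quenched {ι : Type*} [Fintype ι] (x : ι → ℝ) (F : (ι → ℝ) → ℝ) : ℝ :=
  ∫ j, F j ∂(couplings x)

/-- The quenched pressure `P({x}) = [ln Z]`. -/
def pressure {V ι : Type*} [Fintype V] [DecidableEq V] [Fintype ι]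
    (ep : ι → V × V) (x : ι → ℝ) : ℝ :=
  quenched x fun j => Real.log (partitionFn ep x j)

/-! The gauge transformation `S_n ↦ τ_n S_n`, `j_b ↦ τ_b j_b` (with `τ_b` the bond spin of `τ`)
leaves `Z` invariant and multiplies `⟨S_b S_{b'}⟩` by `τ_b τ_{b'}`. Write the law of `j` as the
centred Gaussian law `ν₀` tilted by `exp (Σ x_b j_b - Σ x_b² / 2)`; since `ν₀` is invariant under
sign flips and `Σ x_b τ_b j_b = U(j, τ)`, averaging over the `2^|V|` gauges gives
`2^|V| [G] = e^{-Σ x_b²/2} ∫ Σ_τ G(τ j) e^{U(j,τ)} dν₀`. For `G = ⟨S_b S_{b'}⟩` and for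
`G = ⟨S_b S_{b'}⟩²` the inner sum is the same, `⟨S_b S_{b'}⟩² Z(j)`. -/

open Real

namespace MeasureTheory.Measure

theorem pi_withDensity {ι : Type*} [Fintype ι] {Ω : ι → Type*} [∀ i, MeasurableSpace (Ω i)]
    (μ : ∀ i, Measure (Ω i)) [∀ i, IsProbabilityMeasure (μ i)] (f : ∀ i, Ω i → ENNReal)
    (hf : ∀ i, Measurable (f i)) [∀ i, SigmaFinite ((μ i).withDensity (f i))] :
    Measure.pi (fun i => (μ i).withDensity (f i)) =
      (Measure.pi μ).withDensity (fun ω => ∏ i, f i (ω i)) := by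
  refine pi_eq fun s hs => ?_
  have hbox : (Set.univ.pi s).indicator (fun ω => ∏ i, f i (ω i)) =
      fun ω => ∏ i, (s i).indicator (f i) (ω i) := by
    ext ω
    by_cases h : ω ∈ Set.univ.pi s
    · rw [Set.indicator_of_mem h]
      exact Finset.prod_congr rfl fun i _ => (Set.indicator_of_mem (h i trivial) _).symm
    · obtain ⟨i, hi⟩ := by simpa using h
      rw [Set.indicator_of_notMem h]
      exact (Finset.prod_eq_zero (Finset.mem_univ i) (Set.indicator_of_notMem hi _)).symm
  rw [withDensity_apply _ (.univ_pi hs), ← lintegral_indicator (.univ_pi hs), hbox,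
    lintegral_prod_eq_prod_lintegral_of_indepFun _ _
      (iIndepFun_pi fun i => ((hf i).indicator (hs i)).aemeasurable)
      fun i => ((hf i).indicator (hs i)).comp (measurable_pi_apply i)]
  refine Finset.prod_congr rfl fun i _ => ?_
  rw [(measurePreserving_eval μ i).lintegral_comp ((hf i).indicator (hs i)),
    lintegral_indicator (hs i), withDensity_apply _ (hs i)]

end MeasureTheory.Measure

lemma gaussianReal_eq_withDensity_gaussianReal_zero (m : ℝ) :
    gaussianReal m 1 =
      (gaussianReal 0 1).withDensity fun y => ENNReal.ofReal (exp (m * y - m ^ 2 / 2)) := by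
  rw [gaussianReal_of_var_ne_zero _ one_ne_zero, gaussianReal_of_var_ne_zero _ one_ne_zero,
    ← withDensity_mul _ (measurable_gaussianPDF _ _) (by fun_prop)]
  congr 1
  ext y
  rw [Pi.mul_apply, gaussianPDF, gaussianPDF, ← ENNReal.ofReal_mul (gaussianPDFReal_nonneg _ _ _),
    gaussianPDFReal, gaussianPDFReal, mul_assoc (_ : ℝ)⁻¹, ← exp_add]
  congr 2
  rw [exp_eq_exp]
  push_cast
  ring

lemma measurePreserving_const_mul_gaussianReal_zero {c : ℝ} (hc : c ^ 2 = 1) :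
    MeasurePreserving (c * ·) (gaussianReal 0 1) (gaussianReal 0 1) := by
  refine ⟨measurable_const_mul c, ?_⟩
  rw [gaussianReal_map_const_mul, mul_zero]
  congr
  ext
  simp [hc]

section Couplings

variable {ι : Type*} [Fintype ι]

lemma couplings_eq_withDensity (x : ι → ℝ) :
    couplings x = (couplings 0).withDensity
      fun j => ENNReal.ofReal (exp (∑ i, x i * j i - ∑ i, x i ^ 2 / 2)) := by
  have hx : (fun i => gaussianReal (x i) 1) = fun i => (gaussianReal 0 1).withDensity
      fun y => ENNReal.ofReal (exp (x i * y - x i ^ 2 / 2)) :=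
    funext fun i => gaussianReal_eq_withDensity_gaussianReal_zero (x i)
  rw [couplings, hx, Measure.pi_withDensity _ _ fun i => by fun_prop, couplings]
  simp_rw [Pi.zero_apply, ← ENNReal.ofReal_prod_of_nonneg fun i _ => (exp_pos _).le, ← exp_sum,
    Finset.sum_sub_distrib]

lemma measurePreserving_sign_mul_couplings_zero {c : ι → ℝ} (hc : ∀ i, c i ^ 2 = 1) :
    MeasurePreserving (fun j i => c i * j i) (couplings 0) (couplings 0) :=
  measurePreserving_pi _ _ fun i => measurePreserving_const_mul_gaussianReal_zero (hc i)

lemma integrable_exp_sum_mul_couplings (m a : ι → ℝ) :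
    Integrable (fun j => exp (∑ i, a i * j i)) (couplings m) := by
  simp_rw [exp_sum]
  exact Integrable.fintype_prod fun i => integrable_exp_mul_gaussianReal (a i)

lemma integral_couplings_eq_integral_sign_mul (x : ι → ℝ) {c : ι → ℝ} (hc : ∀ i, c i ^ 2 = 1)
    (G : (ι → ℝ) → ℝ) :
    ∫ j, G j ∂couplings x = exp (-∑ i, x i ^ 2 / 2) *
      ∫ j, G (fun i => c i * j i) * exp (∑ i, x i * j i * c i) ∂couplings 0 := by
  let flip : (ι → ℝ) ≃ᵐ (ι → ℝ) := MeasurableEquiv.ofInvolutive (fun j i => c i * j i)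
    (fun j => funext fun i => by simp [← mul_assoc, ← sq, hc]) (by fun_prop)
  have hflip : MeasurePreserving flip (couplings 0) (couplings 0) :=
    measurePreserving_sign_mul_couplings_zero hc
  rw [couplings_eq_withDensity, integral_withDensity_eq_integral_toReal_smul (by fun_prop)
    (.of_forall fun _ => ENNReal.ofReal_lt_top), ← hflip.integral_comp', ← integral_const_mul]
  refine integral_congr_ae (.of_forall fun j => ?_)
  have hexp : ∑ i, x i * flip j i = ∑ i, x i * j i * c i :=
    Finset.sum_congr rfl fun i _ => by rw [show flip j i = c i * j i from rfl]; ring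
  dsimp only
  rw [ENNReal.toReal_ofReal (exp_pos _).le, hexp, smul_eq_mul, sub_eq_neg_add, exp_add,
    mul_comm (G _), mul_assoc]
  rfl

end Couplings

lemma spin_mul_self (s : Bool) : spin s * spin s = 1 := by cases s <;> simp [spin]

lemma spin_beq (s t : Bool) : spin (s == t) = spin s * spin t := by
  cases s <;> cases t <;> simp [spin]

lemma abs_spin (s : Bool) : |spin s| = 1 := by cases s <;> simp [spin]

section Gauge

variable {V ι : Type*}

lemma bondSpin_sq (ep : ι → V × V) (S : V → Bool) (b : ι) : bondSpin ep S b ^ 2 = 1 := by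
  rw [bondSpin, mul_pow, sq, sq, spin_mul_self, spin_mul_self, one_mul]

lemma abs_bondSpin (ep : ι → V × V) (S : V → Bool) (b : ι) : |bondSpin ep S b| = 1 := by
  rw [bondSpin, abs_mul, abs_spin, abs_spin, one_mul]

/-- The gauge transformation `S_n ↦ τ_n S_n`; on `Bool`, the product of ±1 spins is `==`. -/
def gaugeTransform (τ : V → Bool) : Equiv.Perm (V → Bool) :=
  Function.Involutive.toPerm (fun S n => S n == τ n) fun S => funext fun n => by simp

lemma gaugeTransform_apply (τ S : V → Bool) (n : V) :
    gaugeTransform τ S n = (S n == τ n) := rfl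

lemma gaugeTransform_gaugeTransform (τ S : V → Bool) :
    gaugeTransform τ (gaugeTransform τ S) = S :=
  funext fun n => by simp [gaugeTransform_apply]

lemma bondSpin_gaugeTransform (ep : ι → V × V) (τ S : V → Bool) (b : ι) :
    bondSpin ep (gaugeTransform τ S) b = bondSpin ep τ b * bondSpin ep S b := by
  simp only [bondSpin, gaugeTransform_apply, spin_beq]
  ring

variable [Fintype ι]

lemma potential_gaugeTransform (ep : ι → V × V) (x j : ι → ℝ) (τ S : V → Bool) :
    potential ep x (fun b => bondSpin ep τ b * j b) S = potential ep x j (gaugeTransform τ S) :=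
  Finset.sum_congr rfl fun b _ => by rw [bondSpin_gaugeTransform]; ring

variable [Fintype V] [DecidableEq V]

lemma sum_mul_exp_potential_gaugeTransform (ep : ι → V × V) (x j : ι → ℝ) (τ : V → Bool)
    (f : (V → Bool) → ℝ) :
    ∑ S, f S * exp (potential ep x (fun b => bondSpin ep τ b * j b) S) =
      ∑ S, f (gaugeTransform τ S) * exp (potential ep x j S) :=
  Fintype.sum_equiv (gaugeTransform τ) _ _ fun S => by
    rw [potential_gaugeTransform, gaugeTransform_gaugeTransform]

end Gauge

section Gibbs

variable {V ι : Type*} [Fintype V] [DecidableEq V] [Fintype ι] (ep : ι → V × V) (x : ι → ℝ)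

lemma partitionFn_pos (j : ι → ℝ) : 0 < partitionFn ep x j :=
  Finset.sum_pos (fun _ _ => exp_pos _) Finset.univ_nonempty

lemma partitionFn_gaugeTransform (j : ι → ℝ) (τ : V → Bool) :
    partitionFn ep x (fun b => bondSpin ep τ b * j b) = partitionFn ep x j := by
  simpa [partitionFn] using sum_mul_exp_potential_gaugeTransform ep x j τ 1

lemma gibbs_gaugeTransform (j : ι → ℝ) (τ : V → Bool) (f : (V → Bool) → ℝ) :
    gibbs ep x (fun b => bondSpin ep τ b * j b) f =
      gibbs ep x j (fun S => f (gaugeTransform τ S)) := by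
  rw [gibbs, gibbs, sum_mul_exp_potential_gaugeTransform, partitionFn_gaugeTransform]

lemma gibbs_const_mul (j : ι → ℝ) (a : ℝ) (f : (V → Bool) → ℝ) :
    gibbs ep x j (fun S => a * f S) = a * gibbs ep x j f := by
  simp_rw [gibbs, mul_assoc, ← Finset.mul_sum, mul_div_assoc]

lemma gibbs_mul_partitionFn (j : ι → ℝ) (f : (V → Bool) → ℝ) :
    gibbs ep x j f * partitionFn ep x j = ∑ S, f S * exp (potential ep x j S) :=
  div_mul_cancel₀ _ (partitionFn_pos ep x j).ne'

lemma abs_gibbs_le (j : ι → ℝ) {f : (V → Bool) → ℝ} {M : ℝ} (hf : ∀ S, |f S| ≤ M) :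
    |gibbs ep x j f| ≤ M := by
  rw [gibbs, abs_div, abs_of_pos (partitionFn_pos ep x j), div_le_iff₀ (partitionFn_pos ep x j),
    partitionFn, Finset.mul_sum]
  refine (Finset.abs_sum_le_sum_abs _ _).trans (Finset.sum_le_sum fun S _ => ?_)
  rw [abs_mul, abs_of_pos (exp_pos _)]
  exact mul_le_mul_of_nonneg_right (hf S) (exp_pos _).le

lemma continuous_gibbs (f : (V → Bool) → ℝ) : Continuous fun j => gibbs ep x j f := by
  have hexp : ∀ S, Continuous fun j => exp (potential ep x j S) := fun S => by
    unfold potential; fun_prop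
  exact (continuous_finsetSum _ fun S _ => (hexp S).const_mul _).div
    (continuous_finsetSum _ fun S _ => hexp S) fun j => (partitionFn_pos ep x j).ne'

end Gibbs

lemma card_mul_quenched_eq_integral_sum_gauge {V ι : Type*} [Fintype V] [DecidableEq V] [Fintype ι]
    (ep : ι → V × V) (x : ι → ℝ) {G : (ι → ℝ) → ℝ} (hG : Measurable G) {M : ℝ}
    (hGM : ∀ j, |G j| ≤ M) :
    Fintype.card (V → Bool) * quenched x G = exp (-∑ i, x i ^ 2 / 2) *
      ∫ j, ∑ τ, G (fun b => bondSpin ep τ b * j b) * exp (potential ep x j τ) ∂couplings 0 := by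
  have hint : ∀ τ : V → Bool, Integrable
      (fun j => G (fun b => bondSpin ep τ b * j b) * exp (potential ep x j τ)) (couplings 0) :=
    fun τ => by
      have hflip : Measurable fun j : ι → ℝ => G fun b => bondSpin ep τ b * j b :=
        hG.comp (measurable_pi_lambda _ fun b => (measurable_pi_apply b).const_mul _)
      refine ((integrable_exp_sum_mul_couplings 0 fun b => x b * bondSpin ep τ b).bdd_mul
        hflip.aestronglyMeasurable (.of_forall fun j => hGM _)).congr (.of_forall fun j => ?_)
      simp only [potential, mul_right_comm]
  rw [integral_finsetSum _ fun τ _ => hint τ, Finset.mul_sum, ← nsmul_eq_mul,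
    ← Finset.card_univ, ← Finset.sum_const]
  exact Finset.sum_congr rfl fun τ _ =>
    integral_couplings_eq_integral_sign_mul x (bondSpin_sq ep τ) G

theorem nishimori_two_bond_identity_general
    {V ι : Type*} [Fintype V] [DecidableEq V] [Fintype ι]
    (ep : ι → V × V)
    (x : ι → ℝ) (b b' : ι) :
    quenched x (fun j => gibbs ep x j (fun S => bondSpin ep S b * bondSpin ep S b')) =
      quenched x (fun j =>
        (gibbs ep x j (fun S => bondSpin ep S b * bondSpin ep S b')) ^ 2) := by
  set F : (V → Bool) → ℝ := fun S => bondSpin ep S b * bondSpin ep S b'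
  set g : (ι → ℝ) → ℝ := fun j => gibbs ep x j F
  have hF_sq (τ : V → Bool) : F τ ^ 2 = 1 := by simp only [F, mul_pow, bondSpin_sq, one_mul]
  have hg_gauge (τ : V → Bool) (j : ι → ℝ) : g (fun b => bondSpin ep τ b * j b) = F τ * g j := by
    simp only [g, F, gibbs_gaugeTransform, bondSpin_gaugeTransform, mul_mul_mul_comm,
      gibbs_const_mul]
  have hg_le (j : ι → ℝ) : |g j| ≤ 1 :=
    abs_gibbs_le ep x j fun S => by simp only [F, abs_mul, abs_bondSpin, mul_one, le_refl]
  have hg_meas : Measurable g := (continuous_gibbs ep x F).measurable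
  have hg_sq_le (j : ι → ℝ) : |g j ^ 2| ≤ 1 := by
    rw [abs_pow]; exact pow_le_one₀ (abs_nonneg _) (hg_le j)
  refine mul_left_cancel₀ (Nat.cast_ne_zero.mpr (Fintype.card_ne_zero (α := V → Bool))) ?_
  rw [card_mul_quenched_eq_integral_sum_gauge ep x hg_meas hg_le,
    card_mul_quenched_eq_integral_sum_gauge ep x (hg_meas.pow_const 2) hg_sq_le]
  congr 2 with j
  simp_rw [hg_gauge, mul_pow, hF_sq, one_mul, mul_comm (F _) (g j), mul_assoc, ← Finset.mul_sum,
    ← gibbs_mul_partitionFn]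
  show g j * (g j * partitionFn ep x j) = g j ^ 2 * partitionFn ep x j
  ring

/-- Nishimori gauge identity for a two-bond correlation:
for all bonds `b, b'`, `[⟨S_b S_{b'}⟩] = [⟨S_b S_{b'}⟩²]`. -/
theorem nishimori_two_bond_identity
    {V ι : Type*} [Fintype V] [DecidableEq V] [Fintype ι]
    (ep : ι → V × V) (hep : ∀ b, (ep b).1 ≠ (ep b).2)
    (x : ι → ℝ) (hx : ∀ b, 0 ≤ x b) (b b' : ι) :
    quenched x (fun j => gibbs ep x j (fun S => bondSpin ep S b * bondSpin ep S b')) =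
      quenched x (fun j =>
        (gibbs ep x j (fun S => bondSpin ep S b * bondSpin ep S b')) ^ 2) :=
  nishimori_two_bond_identity_general ep x b b'

end
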